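/- For all a, b > 0, ε > 0 and q ∈ ℝ, one has the second-order expansion α*_ε(a, b, (ε/2)·log(a/b) + q/2) = β_ε(a,b) + (ε/4)·(a - b)·q + (q²/4)·∫₀¹ (a·𝔥(λq/ε) + b·𝔥(-λq/ε))·(1 - λ) dλ. -/

import Mathlib

open Real

/-- The logarithmic mean `Λ(s,t)`. -/
noncomputable def logMean (s t : ℝ) : ℝ :=
  if s = t then s else (s - t) / (Real.log s - Real.log t)

/-- The harmonic-logarithmic mean `Λ_H(s,t) = st/Λ(s,t)`. -/
noncomputable def harmLogMean (s t : ℝ) : ℝ := s * t / logMean s t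

/-- `α*_ε(a,b,ξ) = ε ∫₀^ξ sinh(x/ε) Λ_H(a e^{-x/ε}, b e^{x/ε}) dx`. -/
noncomputable def alphaEps (ε a b ξ : ℝ) : ℝ :=
  ε * ∫ x in (0:ℝ)..ξ,
    Real.sinh (x / ε) * harmLogMean (a * Real.exp (-x / ε)) (b * Real.exp (x / ε))

/-- `β_ε(a,b) = α*_ε(a, b, (ε/2) log(a/b))`. -/
noncomputable def betaEps (ε a b : ℝ) : ℝ :=
  alphaEps ε a b ((ε / 2) * Real.log (a / b))

/-- `𝔥(s) = (1/4)(e^s - 1 - s)/sinh²(s/2)` for `s ≠ 0`, with `𝔥(0) = 1/2`. -/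
noncomputable def hFun (s : ℝ) : ℝ :=
  if s = 0 then 1 / 2 else 1 / 4 * (Real.exp s - 1 - s) / Real.sinh (s / 2) ^ 2

/-!
Write `P(r) = Λ_H(e^r, 1) = r e^r / (e^r - 1)`. Homogeneity and symmetry of `Λ_H` give
`Λ_H(s, t) = s P(log t - log s) = t P(log s - log t)`, so the integrand of `α*_ε` at `x` is
`(a P(r) - b P(-r)) / 2` with `r = 2x/ε - log(a/b)`, and `P' = 𝔥`. Hence
`t ↦ α*_ε(a, b, (ε/2) log(a/b) + t q / 2)` is twice differentiable with second derivative
`(q²/4) (a 𝔥(tq/ε) + b 𝔥(-tq/ε))`, and the expansion is Taylor's formula of order one with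
integral remainder on `[0, 1]`.
-/

open Filter Topology Set MeasureTheory intervalIntegral

/-- Unlike `map_add_eq_sum_add_integral_iteratedFDeriv`, this only asks `f''` to be integrable,
not `f` to be `C²`. -/
theorem taylor_integral_remainder_order_one {f f' f'' : ℝ → ℝ} {x y : ℝ}
    (hf : ∀ t ∈ uIcc x y, HasDerivAt f (f' t) t)
    (hf' : ∀ t ∈ uIcc x y, HasDerivAt f' (f'' t) t)
    (hf'' : IntervalIntegrable f'' volume x y) :
    f y = f x + f' x * (y - x) + ∫ t in x..y, f'' t * (y - t) := by
  have hf'_int : IntervalIntegrable f' volume x y :=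
    ContinuousOn.intervalIntegrable fun t ht => (hf' t ht).continuousAt.continuousWithinAt
  have hparts := integral_mul_deriv_eq_deriv_mul (u := fun t => y - t) (u' := fun _ => -1)
    (fun t _ => (hasDerivAt_id' t).const_sub y) hf' intervalIntegrable_const hf''
  simp only [sub_self, zero_mul, neg_one_mul, intervalIntegral.integral_neg,
    integral_eq_sub_of_hasDerivAt hf hf'_int] at hparts
  rw [integral_congr fun t _ => mul_comm (f'' t) (y - t), hparts]
  ring

lemma logMean_comm (s t : ℝ) : logMean s t = logMean t s := by
  unfold logMean
  split_ifs with h h' h'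
  · exact h
  · exact absurd h.symm h'
  · exact absurd h'.symm h
  · rw [← neg_sub s t, ← neg_sub (log s) (log t), neg_div_neg_eq]

lemma harmLogMean_comm (s t : ℝ) : harmLogMean s t = harmLogMean t s := by
  rw [harmLogMean, harmLogMean, logMean_comm, mul_comm]

lemma logMean_mul_mul {c s t : ℝ} (hc : 0 < c) (hs : 0 < s) (ht : 0 < t) :
    logMean (c * s) (c * t) = c * logMean s t := by
  unfold logMean
  by_cases hst : s = t
  · simp [hst]
  · rw [if_neg (by simpa [hc.ne'] using hst), if_neg hst, log_mul hc.ne' hs.ne',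
      log_mul hc.ne' ht.ne', ← mul_sub, mul_div_assoc, add_sub_add_left_eq_sub]

lemma harmLogMean_mul_mul {c s t : ℝ} (hc : 0 < c) (hs : 0 < s) (ht : 0 < t) :
    harmLogMean (c * s) (c * t) = c * harmLogMean s t := by
  rw [harmLogMean, harmLogMean, logMean_mul_mul hc hs ht]
  rcases eq_or_ne (logMean s t) 0 with h | h
  · simp [h]
  · field_simp

noncomputable def harmLogMeanExp (r : ℝ) : ℝ := harmLogMean (exp r) 1

lemma harmLogMeanExp_zero : harmLogMeanExp 0 = 1 := by
  simp [harmLogMeanExp, harmLogMean, logMean]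

lemma harmLogMeanExp_of_ne_zero {r : ℝ} (hr : r ≠ 0) :
    harmLogMeanExp r = r * exp r / (exp r - 1) := by
  have h : exp r ≠ 1 := by rwa [Ne, exp_eq_one_iff]
  rw [harmLogMeanExp, harmLogMean, logMean, if_neg h, log_exp, log_one, sub_zero, mul_one,
    div_div_eq_mul_div, mul_comm]

lemma harmLogMean_eq_mul_harmLogMeanExp {s t : ℝ} (hs : 0 < s) (ht : 0 < t) :
    harmLogMean s t = s * harmLogMeanExp (log t - log s) := by
  have h : t = s * exp (log t - log s) := by
    rw [exp_sub, exp_log hs, exp_log ht]; field_simp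
  calc harmLogMean s t = harmLogMean (s * 1) (s * exp (log t - log s)) := by rw [mul_one, ← h]
    _ = s * harmLogMeanExp (log t - log s) := by
      rw [harmLogMean_mul_mul hs one_pos (exp_pos _), harmLogMean_comm, harmLogMeanExp]

lemma sinh_mul_harmLogMean {a b : ℝ} (ha : 0 < a) (hb : 0 < b) (z : ℝ) :
    sinh z * harmLogMean (a * exp (-z)) (b * exp z) =
      (a * harmLogMeanExp (2 * z - log (a / b)) -
        b * harmLogMeanExp (-(2 * z - log (a / b)))) / 2 := by
  have hs : 0 < a * exp (-z) := by positivity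
  have ht : 0 < b * exp z := by positivity
  have hr : log (b * exp z) - log (a * exp (-z)) = 2 * z - log (a / b) := by
    rw [log_mul hb.ne' (exp_ne_zero _), log_mul ha.ne' (exp_ne_zero _), log_exp, log_exp,
      log_div ha.ne' hb.ne']
    ring
  have hsplit : sinh z * harmLogMean (a * exp (-z)) (b * exp z) =
      (exp z * harmLogMean (a * exp (-z)) (b * exp z) -
        exp (-z) * harmLogMean (b * exp z) (a * exp (-z))) / 2 := by
    rw [sinh_eq, harmLogMean_comm (b * exp z)]; ring
  rw [hsplit, harmLogMean_eq_mul_harmLogMeanExp hs ht, harmLogMean_eq_mul_harmLogMeanExp ht hs,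
    ← neg_sub (log (b * exp z)), hr, exp_neg]
  field_simp

lemma exp_sub_one_ne_zero {s : ℝ} (hs : s ≠ 0) : exp s - 1 ≠ 0 := by
  rwa [sub_ne_zero, Ne, exp_eq_one_iff]

lemma hFun_of_ne_zero {s : ℝ} (hs : s ≠ 0) :
    hFun s = exp s * (exp s - 1 - s) / (exp s - 1) ^ 2 := by
  have hsq : exp s = exp (s / 2) ^ 2 := by rw [← exp_nat_mul]; ring_nf
  have hsinh : sinh (s / 2) ≠ 0 := by simpa [sinh_eq_zero] using hs
  have h1 := exp_sub_one_ne_zero hs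
  rw [hFun, if_neg hs, sinh_eq, exp_neg]
  rw [sinh_eq, exp_neg] at hsinh
  rw [hsq] at h1 ⊢
  field_simp
  ring

lemma tendsto_exp_sub_one_div : Tendsto (fun s => (exp s - 1) / s) (𝓝[≠] 0) (𝓝 1) := by
  simpa [div_eq_inv_mul] using (hasDerivAt_exp 0).tendsto_slope_zero

lemma tendsto_exp_sub_one_sub_div_sq :
    Tendsto (fun s => (exp s - 1 - s) / s ^ 2) (𝓝[≠] 0) (𝓝 (1 / 2)) := by
  refine HasDerivAt.lhopital_zero_nhdsNE (f' := fun s => exp s - 1) (g' := fun s => 2 * s)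
    (Eventually.of_forall fun s => ((hasDerivAt_exp s).sub_const 1).sub (hasDerivAt_id s))
    (Eventually.of_forall fun s => by simpa using hasDerivAt_pow 2 s)
    (eventually_mem_nhdsWithin.mono fun s hs => mul_ne_zero two_ne_zero hs)
    ?_ ?_ ?_
  · have h : Continuous fun s => exp s - 1 - s := by fun_prop
    exact tendsto_nhdsWithin_of_tendsto_nhds (by simpa using h.tendsto 0)
  · have h : Continuous fun s : ℝ => s ^ 2 := by fun_prop
    exact tendsto_nhdsWithin_of_tendsto_nhds (by simpa using h.tendsto 0)
  · simpa [div_mul_eq_div_div_swap] using tendsto_exp_sub_one_div.div_const 2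

lemma continuousAt_harmLogMeanExp_zero : ContinuousAt harmLogMeanExp 0 := by
  rw [← continuousWithinAt_compl_self, ContinuousWithinAt, harmLogMeanExp_zero]
  have h : Tendsto (fun s => exp s / ((exp s - 1) / s)) (𝓝[≠] 0) (𝓝 (exp 0 / 1)) :=
    ((continuous_exp.tendsto 0).mono_left nhdsWithin_le_nhds).div
      tendsto_exp_sub_one_div one_ne_zero
  rw [exp_zero, div_one] at h
  refine h.congr' (eventually_mem_nhdsWithin.mono fun s (hs : s ≠ 0) => ?_)
  rw [harmLogMeanExp_of_ne_zero hs, div_div_eq_mul_div, mul_comm]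

lemma continuousAt_hFun_zero : ContinuousAt hFun 0 := by
  rw [← continuousWithinAt_compl_self, ContinuousWithinAt]
  have h : Tendsto (fun s => exp s * ((exp s - 1 - s) / s ^ 2) / ((exp s - 1) / s) ^ 2)
      (𝓝[≠] 0) (𝓝 (exp 0 * (1 / 2) / 1 ^ 2)) :=
    (((continuous_exp.tendsto 0).mono_left nhdsWithin_le_nhds).mul
      tendsto_exp_sub_one_sub_div_sq).div (tendsto_exp_sub_one_div.pow 2) (by norm_num)
  rw [exp_zero, one_mul, one_pow, div_one] at h
  rw [show hFun 0 = 1 / 2 from if_pos rfl]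
  refine h.congr' (eventually_mem_nhdsWithin.mono fun s (hs : s ≠ 0) => ?_)
  rw [hFun_of_ne_zero hs]
  field_simp

lemma continuous_hFun : Continuous hFun := by
  refine continuous_iff_continuousAt.2 fun s => ?_
  rcases eq_or_ne s 0 with rfl | hs
  · exact continuousAt_hFun_zero
  · have h : ContinuousAt (fun s => exp s * (exp s - 1 - s) / (exp s - 1) ^ 2) s :=
      ContinuousAt.div (by fun_prop) (by fun_prop) (pow_ne_zero 2 (exp_sub_one_ne_zero hs))
    exact h.congr ((eventually_ne_nhds hs).mono fun t ht => (hFun_of_ne_zero ht).symm)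

lemma hasDerivAt_harmLogMeanExp (r : ℝ) : HasDerivAt harmLogMeanExp (hFun r) r := by
  refine hasDerivAt_of_hasDerivAt_of_ne' (fun s hs => ?_) continuousAt_harmLogMeanExp_zero
    continuous_hFun.continuousAt r
  have h := ((hasDerivAt_id' s).fun_mul (hasDerivAt_exp s)).fun_div
    ((hasDerivAt_exp s).sub_const 1) (exp_sub_one_ne_zero hs)
  refine (h.congr_deriv ?_).congr_of_eventuallyEq
    ((eventually_ne_nhds hs).mono fun t ht => harmLogMeanExp_of_ne_zero ht)
  rw [hFun_of_ne_zero hs]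
  ring

lemma continuous_harmLogMeanExp : Continuous harmLogMeanExp :=
  continuous_iff_continuousAt.2 fun r => (hasDerivAt_harmLogMeanExp r).continuousAt

lemma hasDerivAt_alphaEps {ε a b : ℝ} (ha : 0 < a) (hb : 0 < b) (ξ : ℝ) :
    HasDerivAt (alphaEps ε a b)
      (ε * ((a * harmLogMeanExp (2 * (ξ / ε) - log (a / b)) -
        b * harmLogMeanExp (-(2 * (ξ / ε) - log (a / b)))) / 2)) ξ := by
  unfold alphaEps
  simp_rw [neg_div, sinh_mul_harmLogMean ha hb]
  have := continuous_harmLogMeanExp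
  exact ((Continuous.integral_hasStrictDerivAt (by fun_prop) 0 ξ).hasDerivAt).const_mul ε

lemma hasDerivAt_alphaEps_line {ε a b : ℝ} (hε : ε ≠ 0) (ha : 0 < a) (hb : 0 < b)
    (q t : ℝ) :
    HasDerivAt (fun t => alphaEps ε a b (ε / 2 * log (a / b) + t * q / 2))
      (ε * q / 4 * (a * harmLogMeanExp (t * q / ε) - b * harmLogMeanExp (-(t * q / ε)))) t := by
  have hline : HasDerivAt (fun t => ε / 2 * log (a / b) + t * q / 2) (q / 2) t := by
    simpa using ((hasDerivAt_id' t).mul_const q).div_const 2 |>.const_add (ε / 2 * log (a / b))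
  have harg : 2 * ((ε / 2 * log (a / b) + t * q / 2) / ε) - log (a / b) = t * q / ε := by
    field_simp
    ring
  have h := (hasDerivAt_alphaEps (ε := ε) ha hb _).comp t hline
  rw [harg] at h
  exact h.congr_deriv (by ring)

lemma hasDerivAt_harmLogMeanExp_line {ε : ℝ} (hε : ε ≠ 0) (a b q t : ℝ) :
    HasDerivAt
      (fun t => ε * q / 4 * (a * harmLogMeanExp (t * q / ε) - b * harmLogMeanExp (-(t * q / ε))))
      (q ^ 2 / 4 * (a * hFun (t * q / ε) + b * hFun (-(t * q) / ε))) t := by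
  have hlin : HasDerivAt (fun t => t * q / ε) (q / ε) t := by
    simpa using ((hasDerivAt_id' t).mul_const q).div_const ε
  have h := (((hasDerivAt_harmLogMeanExp _).comp t hlin).const_mul a |>.sub
    (((hasDerivAt_harmLogMeanExp _).comp t hlin.neg).const_mul b)).const_mul (ε * q / 4)
  refine h.congr_deriv ?_
  simp only [Pi.neg_apply, neg_div]
  field_simp
  ring

/-- Second-order expansion of `α*_ε` around the force `(ε/2) log(a/b)`. -/
theorem alphaEps_second_order_expansion (ε a b q : ℝ)
    (hε : 0 < ε) (ha : 0 < a) (hb : 0 < b) :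
    alphaEps ε a b ((ε / 2) * Real.log (a / b) + q / 2) =
      betaEps ε a b + ε / 4 * (a - b) * q +
        q ^ 2 / 4 *
          ∫ lam in (0:ℝ)..1,
            (a * hFun (lam * q / ε) + b * hFun (-(lam * q) / ε)) * (1 - lam) := by
  have hcont :
      Continuous fun t => q ^ 2 / 4 * (a * hFun (t * q / ε) + b * hFun (-(t * q) / ε)) := by
    have := continuous_hFun
    fun_prop
  have h := taylor_integral_remainder_order_one (x := 0) (y := 1)
    (fun t _ => hasDerivAt_alphaEps_line hε.ne' ha hb q t)
    (fun t _ => hasDerivAt_harmLogMeanExp_line hε.ne' a b q t) (hcont.intervalIntegrable 0 1)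
  simp only [one_mul, zero_mul, add_zero, zero_div, neg_zero, harmLogMeanExp_zero, sub_zero,
    mul_one, mul_assoc (q ^ 2 / 4), intervalIntegral.integral_const_mul] at h
  rw [h, betaEps]
  ring
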